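/- Let q : ℝ → ℝ and λ₀ > 0. There is no function u : ℝ → ℂ, twice differentiable on (0,∞), satisfying all of the following: (i) -u''(x) + (2/x²)·u(x) + q(x)·u(x) = λ₀·u(x) for all x > 0; (ii) u(x) → 0 as x → 0⁺ and u'(x) tends to a finite limit as x → 0⁺; (iii) u(x) − i·√λ₀·exp(i·√λ₀·x) → 0 and u'(x) + λ₀·exp(i·√λ₀·x) → 0 as x → ∞. -/

import Mathlib

/-!
For a real potential the conjugate Wronskian `u ū' - u' ū` of a solution is constant, because
`u''` is a real multiple of `u`. The boundary behaviour at `0⁺` forces this constant to vanish,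
while the outgoing asymptotics at `+∞` force it to equal `-2 i λ₀ √λ₀ ≠ 0`.
-/

open Complex ComplexConjugate Filter Topology

/-- `conjWronskian (u x) (u' x)` is the Wronskian `W(u, ū)(x)`. -/
def conjWronskian (a b : ℂ) : ℂ := a * conj b - b * conj a

lemma conjWronskian_ofReal_mul_self (a : ℂ) (r : ℝ) : conjWronskian a (r * a) = 0 := by
  simp only [conjWronskian, map_mul, conj_ofReal]
  ring

lemma conjWronskian_mul_mul (a b e : ℂ) :
    conjWronskian (a * e) (b * e) = normSq e * conjWronskian a b := by
  simp only [conjWronskian, map_mul, normSq_eq_conj_mul_self]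
  ring

lemma HasDerivAt.conjWronskian {u u' : ℝ → ℂ} {v : ℂ} {x : ℝ}
    (hu : HasDerivAt u (u' x) x) (hu' : HasDerivAt u' v x) :
    HasDerivAt (fun t => _root_.conjWronskian (u t) (u' t)) (_root_.conjWronskian (u x) v) x := by
  have h : HasDerivAt (fun t => _root_.conjWronskian (u t) (u' t))
      (u' x * conj (u' x) + u x * conj v - (v * conj (u x) + u' x * conj (u' x))) x :=
    (hu.mul hu'.star).sub (hu'.mul hu.star)
  convert h using 1
  simp only [_root_.conjWronskian]
  ring

lemma Filter.Tendsto.conjWronskian {α : Type*} {l : Filter α} {f g : α → ℂ} {a b : ℂ}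
    (hf : Tendsto f l (𝓝 a)) (hg : Tendsto g l (𝓝 b)) :
    Tendsto (fun x => _root_.conjWronskian (f x) (g x)) l (𝓝 (_root_.conjWronskian a b)) :=
  (hf.mul hg.star).sub (hg.mul hf.star)

lemma tendsto_mul_conj_of_tendsto_sub_mul {α : Type*} {l : Filter α} {f E : α → ℂ} {a : ℂ}
    (hE : ∀ x, ‖E x‖ = 1) (hf : Tendsto (fun x => f x - a * E x) l (𝓝 0)) :
    Tendsto (fun x => f x * conj (E x)) l (𝓝 a) := by
  have hconj : ∀ x, E x * conj (E x) = 1 := fun x => by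
    rw [mul_conj, normSq_eq_norm_sq, hE x]; simp
  rw [tendsto_iff_norm_sub_tendsto_zero]
  refine (tendsto_zero_iff_norm_tendsto_zero.1 hf).congr fun x => ?_
  calc ‖f x - a * E x‖ = ‖(f x - a * E x) * conj (E x)‖ := by
        rw [norm_mul, RCLike.norm_conj, hE, mul_one]
    _ = ‖f x * conj (E x) - a‖ := by rw [sub_mul, mul_assoc, hconj, mul_one]

/-- Multiplying by `conj E` removes the common oscillating phase without changing the Wronskian. -/
lemma tendsto_conjWronskian_of_tendsto_sub_mul {α : Type*} {l : Filter α} {f g E : α → ℂ}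
    {a b : ℂ} (hE : ∀ x, ‖E x‖ = 1) (hf : Tendsto (fun x => f x - a * E x) l (𝓝 0))
    (hg : Tendsto (fun x => g x - b * E x) l (𝓝 0)) :
    Tendsto (fun x => conjWronskian (f x) (g x)) l (𝓝 (conjWronskian a b)) := by
  refine ((tendsto_mul_conj_of_tendsto_sub_mul hE hf).conjWronskian
    (tendsto_mul_conj_of_tendsto_sub_mul hE hg)).congr fun x => ?_
  rw [conjWronskian_mul_mul, normSq_eq_norm_sq, RCLike.norm_conj, hE]
  simp

lemma eq_of_tendsto_of_hasDerivAt_zero_Ioi {E : Type*} [NormedAddCommGroup E] [NormedSpace ℝ E]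
    {f : ℝ → E} {c : ℝ} {a b : E} (hf : ∀ x ∈ Set.Ioi c, HasDerivAt f 0 x)
    (ha : Tendsto f (𝓝[>] c) (𝓝 a)) (hb : Tendsto f atTop (𝓝 b)) : a = b := by
  obtain ⟨k, hk⟩ := isOpen_Ioi.exists_is_const_of_deriv_eq_zero isPreconnected_Ioi
    (fun x hx => (hf x hx).differentiableAt.differentiableWithinAt)
    (fun x hx => (hf x hx).deriv)
  have hka : Tendsto f (𝓝[>] c) (𝓝 k) :=
    tendsto_const_nhds.congr' (eventually_nhdsWithin_of_forall fun x hx => (hk x hx).symm)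
  have hkb : Tendsto f atTop (𝓝 k) :=
    tendsto_const_nhds.congr' ((eventually_gt_atTop c).mono fun x hx => (hk x hx).symm)
  rw [tendsto_nhds_unique ha hka, tendsto_nhds_unique hb hkb]

lemma conjWronskian_I_mul_neg_ne_zero {s μ : ℝ} (hs : s ≠ 0) (hμ : μ ≠ 0) :
    conjWronskian (I * s) (-μ) ≠ 0 := by
  have : conjWronskian (I * s) (-μ) = -2 * I * μ * s := by
    simp only [conjWronskian, map_mul, map_neg, conj_I, conj_ofReal]
    ring
  rw [this]
  simp [hs, hμ]

/-- For real potential `q` and `λ₀ > 0`, there is no solution `u` of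
`-u'' + (2/x²)u + q u = λ₀ u` on `(0,∞)` that both vanishes at `0⁺` (with `u'`
tending to a finite limit there) and is asymptotic to the outgoing exponential
`i√λ₀ e^{i√λ₀ x}` (with derivative `−λ₀ e^{i√λ₀ x}`) at `+∞`. -/
theorem no_solution_with_both_boundary_and_outgoing
    (q : ℝ → ℝ) (μ : ℝ) (hμ : 0 < μ) :
    ¬ ∃ u u' u'' : ℝ → ℂ,
      (∀ x ∈ Set.Ioi (0 : ℝ), HasDerivAt u (u' x) x) ∧
      (∀ x ∈ Set.Ioi (0 : ℝ), HasDerivAt u' (u'' x) x) ∧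
      (∀ x ∈ Set.Ioi (0 : ℝ),
        -u'' x + (2 / (x : ℂ) ^ 2) * u x + (q x : ℂ) * u x = (μ : ℂ) * u x) ∧
      Tendsto u (nhdsWithin 0 (Set.Ioi 0)) (nhds 0) ∧
      (∃ L : ℂ, Tendsto u' (nhdsWithin 0 (Set.Ioi 0)) (nhds L)) ∧
      Tendsto (fun x : ℝ =>
        u x - Complex.I * (Real.sqrt μ : ℂ) * Complex.exp (Complex.I * (Real.sqrt μ : ℂ) * x))
        atTop (nhds 0) ∧
      Tendsto (fun x : ℝ =>
        u' x + (μ : ℂ) * Complex.exp (Complex.I * (Real.sqrt μ : ℂ) * x))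
        atTop (nhds 0) := by
  rintro ⟨u, u', u'', hu, hu', hode, h0, ⟨L, hL⟩, hinf, hinf'⟩
  have hderiv : ∀ x ∈ Set.Ioi (0 : ℝ), HasDerivAt (fun t => conjWronskian (u t) (u' t)) 0 x := by
    intro x hx
    have hu'' : u'' x = ((2 / x ^ 2 + q x - μ : ℝ) : ℂ) * u x := by
      push_cast
      linear_combination -hode x hx
    simpa only [hu'', conjWronskian_ofReal_mul_self] using (hu x hx).conjWronskian (hu' x hx)
  have hzero : Tendsto (fun t => conjWronskian (u t) (u' t)) (𝓝[>] 0) (𝓝 0) := by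
    simpa [conjWronskian] using h0.conjWronskian hL
  have hinfty := tendsto_conjWronskian_of_tendsto_sub_mul
    (E := fun x : ℝ => exp (I * Real.sqrt μ * x)) (a := I * Real.sqrt μ) (b := -μ)
    (fun x => by rw [mul_assoc, ← ofReal_mul, norm_exp_I_mul_ofReal]) hinf
    (hinf'.congr fun x => by ring)
  exact conjWronskian_I_mul_neg_ne_zero (Real.sqrt_pos.2 hμ).ne' hμ.ne'
    (eq_of_tendsto_of_hasDerivAt_zero_Ioi hderiv hzero hinfty).symm
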